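/- Along any solution of the gyroscopic Chaplygin ball system, the functions F₁(t) = ⟨γ(t), γ(t)⟩, F₂(t) = ½⟨G(t), ω(t)⟩ and F₃(t) = ⟨G(t) + κ, G(t) + κ⟩ are constant in t, for every value of ε. -/

import Mathlib

/-!
`F₁` and `F₃` are squared norms of vectors `v` with `v' = v × w` (up to a scalar), hence
`d/dt ⟨v, v⟩ = 2 ⟨v, v × w⟩ = 0`. For `F₂`, `d/dt ⟨G, ω⟩ = ⟨G', ω⟩ + ⟨G, ω'⟩`. Differentiating
`G = 𝐈 ω - D ⟨ω, γ⟩ γ` and pairing with `ω` gives `⟨ω, G'⟩ = ⟨G, ω'⟩`, because `𝐈` is symmetric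
and `⟨ω, γ'⟩ = ε ⟨ω, γ × ω⟩ = 0`; so `d/dt ⟨G, ω⟩ = 2 ⟨(G + κ) × ω, ω⟩ = 0`.
-/

open Matrix

section Calculus

variable {ι : Type*} [Fintype ι] {t : ℝ}

theorem HasDerivAt.dotProduct {u v : ℝ → ι → ℝ} {u' v' : ι → ℝ}
    (hu : HasDerivAt u u' t) (hv : HasDerivAt v v' t) :
    HasDerivAt (fun s => u s ⬝ᵥ v s) (u' ⬝ᵥ v t + u t ⬝ᵥ v') t := by
  simpa only [_root_.dotProduct, Pi.mul_apply, ← Finset.sum_add_distrib] using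
    HasDerivAt.fun_sum fun i _ => (hasDerivAt_pi.1 hu i).mul (hasDerivAt_pi.1 hv i)

theorem HasDerivAt.mulVec {m : Type*} [Fintype m] (M : Matrix m ι ℝ) {u : ℝ → ι → ℝ}
    {u' : ι → ℝ} (hu : HasDerivAt u u' t) :
    HasDerivAt (fun s => M *ᵥ u s) (M *ᵥ u') t :=
  M.mulVecLin.toContinuousLinearMap.hasFDerivAt.comp_hasDerivAt t hu

theorem eq_of_forall_hasDerivAt_zero {f : ℝ → ℝ} (hf : ∀ t, HasDerivAt f 0 t) (t₁ t₂ : ℝ) :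
    f t₁ = f t₂ :=
  is_const_of_deriv_eq_zero (fun t => (hf t).differentiableAt) (fun t => (hf t).deriv) t₁ t₂

theorem dotProduct_self_eq_of_hasDerivAt_orthogonal {u w : ℝ → ι → ℝ}
    (hu : ∀ t, HasDerivAt u (w t) t) (horth : ∀ t, u t ⬝ᵥ w t = 0) (t₁ t₂ : ℝ) :
    u t₁ ⬝ᵥ u t₁ = u t₂ ⬝ᵥ u t₂ :=
  eq_of_forall_hasDerivAt_zero (fun t => by
    simpa only [dotProduct_comm (w t), horth, add_zero] using (hu t).dotProduct (hu t)) t₁ t₂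

-- Both sides equal `⟨M ω, ω'⟩ - D ⟨ω, γ⟩ ⟨γ, ω'⟩`.
theorem dotProduct_hasDerivAt_symm_of_isSymm {M : Matrix ι ι ℝ} (hM : M.IsSymm) {D : ℝ}
    {ω γ G : ℝ → ι → ℝ} {ω' γ' G' : ι → ℝ}
    (hG : ∀ s, G s = M *ᵥ ω s - (D * (ω s ⬝ᵥ γ s)) • γ s)
    (hω : HasDerivAt ω ω' t) (hγ : HasDerivAt γ γ' t) (hG' : HasDerivAt G G' t)
    (horth : ω t ⬝ᵥ γ' = 0) :
    ω t ⬝ᵥ G' = G t ⬝ᵥ ω' := by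
  have hG'_expand : HasDerivAt G (M *ᵥ ω' - ((D * (ω t ⬝ᵥ γ t)) • γ'
      + (D * (ω' ⬝ᵥ γ t + ω t ⬝ᵥ γ')) • γ t)) t := by
    rw [funext hG]
    exact (hω.mulVec M).sub (((hω.dotProduct hγ).const_mul D).smul hγ)
  have hMsymm : ω t ⬝ᵥ M *ᵥ ω' = M *ᵥ ω t ⬝ᵥ ω' := by
    rw [dotProduct_mulVec, ← mulVec_transpose, hM.eq]
  rw [hG'.unique hG'_expand, hG, horth]
  simp only [dotProduct_sub, sub_dotProduct, dotProduct_add, dotProduct_smul, smul_dotProduct,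
    smul_eq_mul, hMsymm, horth]
  rw [dotProduct_comm ω' (γ t), dotProduct_comm (ω t) (γ t)]
  ring

end Calculus

theorem gyroscopic_chaplygin_ball_integrals_general
    (I₁ I₂ I₃ D ε : ℝ)
    (κ : Fin 3 → ℝ)
    (ω γ : ℝ → Fin 3 → ℝ) (hω : Differentiable ℝ ω)
    (G : ℝ → Fin 3 → ℝ)
    (hG : ∀ t, G t =
      (Matrix.diagonal ![I₁, I₂, I₃] + D • (1 : Matrix (Fin 3) (Fin 3) ℝ)) *ᵥ ω t
        - (D * (ω t ⬝ᵥ γ t)) • γ t)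
    (heqG : ∀ t, HasDerivAt G ((G t + κ) ⨯₃ ω t) t)
    (heqγ : ∀ t, HasDerivAt γ (ε • (γ t ⨯₃ ω t)) t) :
    ∀ t₁ t₂ : ℝ,
      γ t₁ ⬝ᵥ γ t₁ = γ t₂ ⬝ᵥ γ t₂ ∧
      (1 / 2) * (G t₁ ⬝ᵥ ω t₁) = (1 / 2) * (G t₂ ⬝ᵥ ω t₂) ∧
      (G t₁ + κ) ⬝ᵥ (G t₁ + κ) = (G t₂ + κ) ⬝ᵥ (G t₂ + κ) := by
  have hsymm : (diagonal ![I₁, I₂, I₃] + D • (1 : Matrix (Fin 3) (Fin 3) ℝ)).IsSymm :=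
    (isSymm_diagonal _).add (isSymm_one.smul D)
  have hF₂ : ∀ t, HasDerivAt (fun s => G s ⬝ᵥ ω s) 0 t := fun t => by
    have hω' := (hω t).hasDerivAt
    have hrot : (G t + κ) ⨯₃ ω t ⬝ᵥ ω t = 0 := by rw [dotProduct_comm, dot_cross_self]
    have hsym := dotProduct_hasDerivAt_symm_of_isSymm hsymm hG hω' (heqγ t) (heqG t)
      (by rw [dotProduct_smul, dot_cross_self, smul_zero])
    rw [dotProduct_comm, hrot] at hsym
    simpa only [hrot, ← hsym, add_zero] using (heqG t).dotProduct hω'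
  intro t₁ t₂
  exact ⟨dotProduct_self_eq_of_hasDerivAt_orthogonal heqγ
      (fun t => by rw [dotProduct_smul, dot_self_cross, smul_zero]) t₁ t₂,
    congrArg _ (eq_of_forall_hasDerivAt_zero hF₂ t₁ t₂),
    dotProduct_self_eq_of_hasDerivAt_orthogonal (fun t => (heqG t).add_const κ)
      (fun t => dot_self_cross _ _) t₁ t₂⟩

/-- Along any solution of the gyroscopic Chaplygin ball system, the functions
`F₁ = ⟨γ, γ⟩`, `F₂ = ½⟨G, ω⟩` and `F₃ = ⟨G + κ, G + κ⟩` are constant,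
for every value of `ε`. -/
theorem gyroscopic_chaplygin_ball_integrals
    (I₁ I₂ I₃ D ε : ℝ) (hI₁ : 0 < I₁) (hI₂ : 0 < I₂) (hI₃ : 0 < I₃) (hD : 0 < D)
    (κ : Fin 3 → ℝ)
    (ω γ : ℝ → Fin 3 → ℝ) (hω : Differentiable ℝ ω) (hγ : Differentiable ℝ γ)
    (G : ℝ → Fin 3 → ℝ)
    (hG : ∀ t, G t =
      (Matrix.diagonal ![I₁, I₂, I₃] + D • (1 : Matrix (Fin 3) (Fin 3) ℝ)) *ᵥ ω t
        - (D * (ω t ⬝ᵥ γ t)) • γ t)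
    (heqG : ∀ t, HasDerivAt G ((G t + κ) ⨯₃ ω t) t)
    (heqγ : ∀ t, HasDerivAt γ (ε • (γ t ⨯₃ ω t)) t) :
    ∀ t₁ t₂ : ℝ,
      γ t₁ ⬝ᵥ γ t₁ = γ t₂ ⬝ᵥ γ t₂ ∧
      (1 / 2) * (G t₁ ⬝ᵥ ω t₁) = (1 / 2) * (G t₂ ⬝ᵥ ω t₂) ∧
      (G t₁ + κ) ⬝ᵥ (G t₁ + κ) = (G t₂ + κ) ⬝ᵥ (G t₂ + κ) :=
  gyroscopic_chaplygin_ball_integrals_general I₁ I₂ I₃ D ε κ ω γ hω G hG heqG heqγ
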